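/- Let C, D : ℕ → [-1,1] be functions on primes satisfying pair Sato-Tate equidistribution: for all intervals I₁, I₂ ⊆ [-1,1], #{p ≤ x prime : C(p) ∈ I₁, D(p) ∈ I₂}/π(x) → μ_ST(I₁)·μ_ST(I₂). Let χ₁, χ₂ : ℕ → {-1,0,1} and define a(p) = C(p) - χ₁(p)/(2√p), b(p) = D(p) - χ₂(p)/(2√p). Then the set of primes p with a(p)·b(p) < 0 has natural density 1/2. -/

import Mathlib

open MeasureTheory Filter Real Set

noncomputable def muST : Measure ℝ :=
  (volume.restrict (Icc (-1 : ℝ) 1)).withDensity fun t =>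
    ENNReal.ofReal ((2 / π) * Real.sqrt (1 - t ^ 2))

open scoped Classical in
noncomputable def primeCount (S : Set ℕ) (x : ℕ) : ℕ :=
  ((Finset.range (x + 1)).filter fun p => p.Prime ∧ p ∈ S).card

noncomputable def primePi (x : ℕ) : ℕ :=
  ((Finset.range (x + 1)).filter Nat.Prime).card

def HasNaturalDensity (S : Set ℕ) (δ : ℝ) : Prop :=
  Tendsto (fun x : ℕ => (primeCount S x : ℝ) / (primePi x : ℝ)) atTop (nhds δ)

def PairSatoTateEquidistributed (C D : ℕ → ℝ) : Prop :=
  ∀ a₁ b₁ a₂ b₂ : ℝ, -1 ≤ a₁ → a₁ ≤ b₁ → b₁ ≤ 1 → -1 ≤ a₂ → a₂ ≤ b₂ → b₂ ≤ 1 →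
    Tendsto
      (fun x : ℕ =>
        (primeCount {p | C p ∈ Icc a₁ b₁ ∧ D p ∈ Icc a₂ b₂} x : ℝ) / (primePi x : ℝ))
      atTop (nhds ((muST (Icc a₁ b₁)).toReal * (muST (Icc a₂ b₂)).toReal))

/-! Beyond some point the corrections `χᵢ p / (2 √p)` are smaller than any fixed `ε > 0`, so for
all but finitely many primes the product is negative when `(C p, D p)` lies in
`[ε,1] × [-1,-ε] ∪ [-1,-ε] × [ε,1]` and positive when it lies in `[ε,1]² ∪ [-1,-ε]²`. By pair
Sato–Tate equidistribution and the symmetry of `μ_ST`, each of these unions has density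
`2 μ_ST([ε,1])² ≥ 2 (1/2 - ε)²`. This bounds from below the lower densities of the set and of its
complement, and `ε → 0` squeezes the density to `1/2`. -/

section PrimeDensity

noncomputable def primeRatio (S : Set ℕ) (x : ℕ) : ℝ := primeCount S x / primePi x

theorem primePi_eq_primeCounting : primePi = Nat.primeCounting := by
  funext x
  rw [primePi, Nat.primeCounting, Nat.primeCounting', Nat.count_eq_card_filter_range]

theorem tendsto_primePi_atTop : Tendsto primePi atTop atTop :=
  primePi_eq_primeCounting ▸ Nat.tendsto_primeCounting

open scoped Classical

theorem primeCount_union_of_disjoint {S S' : Set ℕ} (h : Disjoint S S') (x : ℕ) :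
    primeCount (S ∪ S') x = primeCount S x + primeCount S' x := by
  unfold primeCount
  rw [← Finset.card_union_of_disjoint]
  · congr 1
    ext p
    simp only [Finset.mem_filter, Finset.mem_union, Set.mem_union]
    tauto
  · exact Finset.disjoint_filter.2 fun p _ hp hp' => Set.disjoint_left.1 h hp.2 hp'.2

theorem primeCount_add_primeCount_compl (S : Set ℕ) (x : ℕ) :
    primeCount S x + primeCount Sᶜ x = primePi x := by
  unfold primeCount primePi
  simp only [← Finset.filter_filter, Set.mem_compl_iff]
  exact Finset.card_filter_add_card_filter_not _

theorem primeCount_le_add_of_eventually_imp {S T : Set ℕ} (h : ∀ᶠ p in atTop, p ∈ S → p ∈ T) :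
    ∃ K : ℕ, ∀ x, primeCount S x ≤ primeCount T x + K := by
  obtain ⟨K, hK⟩ := eventually_atTop.1 h
  refine ⟨K, fun x => ?_⟩
  unfold primeCount
  calc _ ≤ (((Finset.range (x + 1)).filter fun p => p.Prime ∧ p ∈ T) ∪ Finset.range K).card := by
        refine Finset.card_le_card fun p hp => ?_
        simp only [Finset.mem_filter, Finset.mem_union, Finset.mem_range] at hp ⊢
        by_cases hpK : p < K
        · exact Or.inr hpK
        · exact Or.inl ⟨hp.1, hp.2.1, hK p (not_lt.1 hpK) hp.2.2⟩
    _ ≤ _ := (Finset.card_union_le _ _).trans_eq (by rw [Finset.card_range])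

theorem primeRatio_add_primeRatio_compl (S : Set ℕ) {x : ℕ} (hx : 0 < primePi x) :
    primeRatio S x + primeRatio Sᶜ x = 1 := by
  rw [primeRatio, primeRatio, ← add_div, div_eq_one_iff_eq (by positivity), ← Nat.cast_add,
    primeCount_add_primeCount_compl]

end PrimeDensity

section NaturalDensity

variable {S T : Set ℕ}

theorem HasNaturalDensity.union {δ δ' : ℝ} (hS : HasNaturalDensity S δ)
    (hT : HasNaturalDensity T δ') (h : Disjoint S T) : HasNaturalDensity (S ∪ T) (δ + δ') :=
  (hS.add hT).congr fun x => by
    rw [primeCount_union_of_disjoint h, Nat.cast_add, add_div]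

theorem HasNaturalDensity.eventually_lt_primeRatio {δ c : ℝ} (hS : HasNaturalDensity S δ)
    (hST : ∀ᶠ p in atTop, p ∈ S → p ∈ T) (hc : c < δ) :
    ∀ᶠ x in atTop, c < primeRatio T x := by
  obtain ⟨K, hK⟩ := primeCount_le_add_of_eventually_imp hST
  have hlim : Tendsto (fun x => primeRatio S x - K / primePi x) atTop (nhds (δ - 0)) :=
    hS.sub (tendsto_const_nhds.div_atTop (tendsto_natCast_atTop_atTop.comp tendsto_primePi_atTop))
  filter_upwards [hlim.eventually (lt_mem_nhds (by simpa using hc))] with x hx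
  refine hx.trans_le ?_
  rw [primeRatio, primeRatio, ← sub_div]
  gcongr
  exact sub_le_iff_le_add.2 (mod_cast hK x)

theorem hasNaturalDensity_of_forall_lt_primeRatio {δ : ℝ}
    (hT : ∀ c < δ, ∀ᶠ x in atTop, c < primeRatio T x)
    (hTc : ∀ c < 1 - δ, ∀ᶠ x in atTop, c < primeRatio Tᶜ x) : HasNaturalDensity T δ := by
  refine tendsto_order.2 ⟨hT, fun c hc => ?_⟩
  filter_upwards [hTc (1 - c) (by linarith), tendsto_primePi_atTop.eventually_gt_atTop 0]
    with x hx hπ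
  change primeRatio T x < c
  linarith [primeRatio_add_primeRatio_compl T hπ]

end NaturalDensity

section SatoTateMeasure

noncomputable def satoTateDensity (t : ℝ) : ℝ := 2 / π * √(1 - t ^ 2)

theorem continuous_satoTateDensity : Continuous satoTateDensity := by
  unfold satoTateDensity; fun_prop

theorem satoTateDensity_nonneg (t : ℝ) : 0 ≤ satoTateDensity t := by
  unfold satoTateDensity; positivity

theorem satoTateDensity_le_one (t : ℝ) : satoTateDensity t ≤ 1 := by
  have hsqrt : √(1 - t ^ 2) ≤ 1 := Real.sqrt_le_one.2 (by nlinarith)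
  have hπ : 2 / π ≤ 1 := (div_le_one pi_pos).2 two_le_pi
  exact mul_le_one₀ hπ (Real.sqrt_nonneg _) hsqrt

theorem intervalIntegrable_satoTateDensity (a b : ℝ) :
    IntervalIntegrable satoTateDensity volume a b :=
  continuous_satoTateDensity.intervalIntegrable a b

theorem muST_Icc_toReal {a b : ℝ} (ha : -1 ≤ a) (hab : a ≤ b) (hb : b ≤ 1) :
    (muST (Icc a b)).toReal = ∫ t in a..b, satoTateDensity t := by
  rw [muST, withDensity_apply _ measurableSet_Icc, Measure.restrict_restrict measurableSet_Icc,
    inter_eq_left.2 (Icc_subset_Icc ha hb), intervalIntegral.integral_of_le hab,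
    ← integral_Icc_eq_integral_Ioc, integral_eq_lintegral_of_nonneg_ae
      (ae_of_all _ satoTateDensity_nonneg) continuous_satoTateDensity.aestronglyMeasurable]
  rfl

theorem integral_satoTateDensity_neg (a b : ℝ) :
    ∫ t in -b..-a, satoTateDensity t = ∫ t in a..b, satoTateDensity t := by
  rw [← intervalIntegral.integral_comp_neg]
  simp only [satoTateDensity, neg_sq]

theorem integral_satoTateDensity_zero_one : ∫ t in (0 : ℝ)..1, satoTateDensity t = 1 / 2 := by
  have htotal : ∫ t in (-1 : ℝ)..1, satoTateDensity t = 1 := by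
    simp only [satoTateDensity]
    rw [intervalIntegral.integral_const_mul, integral_sqrt_one_sub_sq]
    field_simp
  have hsymm := integral_satoTateDensity_neg 0 1
  rw [neg_zero] at hsymm
  rw [← intervalIntegral.integral_add_adjacent_intervals (intervalIntegrable_satoTateDensity _ 0)
    (intervalIntegrable_satoTateDensity 0 _), hsymm] at htotal
  linarith

theorem muST_Icc_neg_toReal {a b : ℝ} (ha : -1 ≤ a) (hab : a ≤ b) (hb : b ≤ 1) :
    (muST (Icc (-b) (-a))).toReal = (muST (Icc a b)).toReal := by
  rw [muST_Icc_toReal (by linarith) (by linarith) (by linarith), muST_Icc_toReal ha hab hb,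
    integral_satoTateDensity_neg]

theorem half_sub_le_muST_Icc_toReal {ε : ℝ} (hε : 0 ≤ ε) (hε1 : ε ≤ 1) :
    1 / 2 - ε ≤ (muST (Icc ε 1)).toReal := by
  have hhead : ∫ t in (0 : ℝ)..ε, satoTateDensity t ≤ ε := by
    simpa using intervalIntegral.integral_mono_on hε (intervalIntegrable_satoTateDensity 0 ε)
      intervalIntegrable_const fun t _ => satoTateDensity_le_one t
  rw [muST_Icc_toReal (by linarith) hε1 le_rfl, ← integral_satoTateDensity_zero_one,
    ← intervalIntegral.integral_add_adjacent_intervals (intervalIntegrable_satoTateDensity 0 ε)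
      (intervalIntegrable_satoTateDensity ε 1)]
  linarith

theorem exists_lt_two_mul_muST_Icc_toReal_sq {c : ℝ} (hc : c < 1 / 2) :
    ∃ ε, 0 < ε ∧ ε ≤ 1 ∧ c < 2 * (muST (Icc ε 1)).toReal ^ 2 := by
  set ε := min ((1 / 2 - c) / 4) (1 / 2)
  have hε : 0 < ε := lt_min (by linarith) one_half_pos
  have hε₁ : ε ≤ (1 / 2 - c) / 4 := min_le_left _ _
  have hε₂ : ε ≤ 1 / 2 := min_le_right _ _
  have hm := half_sub_le_muST_Icc_toReal hε.le (by linarith)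
  exact ⟨ε, hε, by linarith, by nlinarith⟩

end SatoTateMeasure

section SignPatterns

variable {C D : ℕ → ℝ} {ε : ℝ}

def oppositeSignSet (C D : ℕ → ℝ) (ε : ℝ) : Set ℕ :=
  {p | C p ∈ Icc ε 1 ∧ D p ∈ Icc (-1) (-ε)} ∪ {p | C p ∈ Icc (-1) (-ε) ∧ D p ∈ Icc ε 1}

def sameSignSet (C D : ℕ → ℝ) (ε : ℝ) : Set ℕ :=
  {p | C p ∈ Icc ε 1 ∧ D p ∈ Icc ε 1} ∪ {p | C p ∈ Icc (-1) (-ε) ∧ D p ∈ Icc (-1) (-ε)}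

theorem sub_mul_sub_neg_of_mem_oppositeSignSet {u v : ℝ} {p : ℕ}
    (hp : p ∈ oppositeSignSet C D ε) (hu : |u| < ε) (hv : |v| < ε) :
    (C p - u) * (D p - v) < 0 := by
  rw [abs_lt] at hu hv
  rcases hp with ⟨⟨hC, -⟩, -, hD⟩ | ⟨⟨-, hC⟩, hD, -⟩
  · exact mul_neg_of_pos_of_neg (by linarith) (by linarith)
  · exact mul_neg_of_neg_of_pos (by linarith) (by linarith)

theorem sub_mul_sub_pos_of_mem_sameSignSet {u v : ℝ} {p : ℕ}
    (hp : p ∈ sameSignSet C D ε) (hu : |u| < ε) (hv : |v| < ε) :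
    0 < (C p - u) * (D p - v) := by
  rw [abs_lt] at hu hv
  rcases hp with ⟨⟨hC, -⟩, hD, -⟩ | ⟨⟨-, hC⟩, -, hD⟩
  · exact mul_pos (by linarith) (by linarith)
  · exact mul_pos_of_neg_of_neg (by linarith) (by linarith)

theorem PairSatoTateEquidistributed.hasNaturalDensity_oppositeSignSet
    (h : PairSatoTateEquidistributed C D) (hε : 0 < ε) (hε1 : ε ≤ 1) :
    HasNaturalDensity (oppositeSignSet C D ε) (2 * (muST (Icc ε 1)).toReal ^ 2) := by
  unfold oppositeSignSet
  have hpm := h ε 1 (-1) (-ε) (by linarith) hε1 le_rfl le_rfl (by linarith) (by linarith)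
  have hmp := h (-1) (-ε) ε 1 le_rfl (by linarith) (by linarith) (by linarith) hε1 le_rfl
  rw [muST_Icc_neg_toReal (by linarith) hε1 le_rfl] at hpm hmp
  have hdisj : Disjoint {p | C p ∈ Icc ε 1 ∧ D p ∈ Icc (-1) (-ε)}
      {p | C p ∈ Icc (-1) (-ε) ∧ D p ∈ Icc ε 1} :=
    disjoint_left.2 fun p h₁ h₂ => by linarith [h₁.1.1, h₂.1.2]
  convert HasNaturalDensity.union hpm hmp hdisj using 1
  ring

theorem PairSatoTateEquidistributed.hasNaturalDensity_sameSignSet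
    (h : PairSatoTateEquidistributed C D) (hε : 0 < ε) (hε1 : ε ≤ 1) :
    HasNaturalDensity (sameSignSet C D ε) (2 * (muST (Icc ε 1)).toReal ^ 2) := by
  unfold sameSignSet
  have hpp := h ε 1 ε 1 (by linarith) hε1 le_rfl (by linarith) hε1 le_rfl
  have hmm := h (-1) (-ε) (-1) (-ε) le_rfl (by linarith) (by linarith) le_rfl (by linarith)
    (by linarith)
  rw [muST_Icc_neg_toReal (by linarith) hε1 le_rfl] at hmm
  have hdisj : Disjoint {p | C p ∈ Icc ε 1 ∧ D p ∈ Icc ε 1}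
      {p | C p ∈ Icc (-1) (-ε) ∧ D p ∈ Icc (-1) (-ε)} :=
    disjoint_left.2 fun p h₁ h₂ => by linarith [h₁.1.1, h₂.1.2]
  convert HasNaturalDensity.union hpp hmm hdisj using 1
  ring

end SignPatterns

theorem tendsto_div_two_sqrt_atTop_zero {χ : ℕ → ℝ} (hχ : ∀ p, |χ p| ≤ 1) :
    Tendsto (fun p : ℕ => χ p / (2 * √p)) atTop (nhds 0) := by
  have hsqrt : Tendsto (fun p : ℕ => 2 * √(p : ℝ)) atTop atTop :=
    (tendsto_sqrt_atTop.comp tendsto_natCast_atTop_atTop).const_mul_atTop two_pos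
  refine squeeze_zero_norm (fun p => ?_) (tendsto_inv_atTop_zero.comp hsqrt)
  have h2sqrt : 0 ≤ 2 * √(p : ℝ) := by positivity
  rw [Real.norm_eq_abs, abs_div, abs_of_nonneg h2sqrt, div_eq_mul_inv, Function.comp_apply]
  exact mul_le_of_le_one_left (inv_nonneg.2 h2sqrt) (hχ p)

theorem density_half_product_neg_general (C D : ℕ → ℝ) (χ₁ χ₂ : ℕ → ℝ)
    (hχ₁ : ∀ p : ℕ, χ₁ p = -1 ∨ χ₁ p = 0 ∨ χ₁ p = 1)
    (hχ₂ : ∀ p : ℕ, χ₂ p = -1 ∨ χ₂ p = 0 ∨ χ₂ p = 1)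
    (hST : PairSatoTateEquidistributed C D) :
    HasNaturalDensity
      {p | (C p - χ₁ p / (2 * Real.sqrt p)) * (D p - χ₂ p / (2 * Real.sqrt p)) < 0}
      (1 / 2) := by
  have habs {χ : ℕ → ℝ} (hχ : ∀ p : ℕ, χ p = -1 ∨ χ p = 0 ∨ χ p = 1) (p : ℕ) : |χ p| ≤ 1 := by
    rcases hχ p with h | h | h <;> simp [h]
  have hsmall (ε : ℝ) (hε : 0 < ε) :
      ∀ᶠ p : ℕ in atTop, |χ₁ p / (2 * √p)| < ε ∧ |χ₂ p / (2 * √p)| < ε := by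
    simpa only [Real.dist_0_eq_abs] using
      (Metric.tendsto_nhds.1 (tendsto_div_two_sqrt_atTop_zero (habs hχ₁)) ε hε).and
        (Metric.tendsto_nhds.1 (tendsto_div_two_sqrt_atTop_zero (habs hχ₂)) ε hε)
  refine hasNaturalDensity_of_forall_lt_primeRatio (fun c hc => ?_) (fun c hc => ?_)
  · obtain ⟨ε, hε, hε1, hcε⟩ := exists_lt_two_mul_muST_Icc_toReal_sq hc
    refine (hST.hasNaturalDensity_oppositeSignSet hε hε1).eventually_lt_primeRatio ?_ hcε
    filter_upwards [hsmall ε hε] with p ⟨h₁, h₂⟩ hp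
    exact sub_mul_sub_neg_of_mem_oppositeSignSet hp h₁ h₂
  · obtain ⟨ε, hε, hε1, hcε⟩ := exists_lt_two_mul_muST_Icc_toReal_sq (by linarith : c < 1 / 2)
    refine (hST.hasNaturalDensity_sameSignSet hε hε1).eventually_lt_primeRatio ?_ hcε
    filter_upwards [hsmall ε hε] with p ⟨h₁, h₂⟩ hp
    exact (sub_mul_sub_pos_of_mem_sameSignSet hp h₁ h₂).not_gt

theorem density_half_product_neg (C D : ℕ → ℝ) (χ₁ χ₂ : ℕ → ℝ)
    (hC : ∀ p : ℕ, p.Prime → C p ∈ Icc (-1 : ℝ) 1)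
    (hD : ∀ p : ℕ, p.Prime → D p ∈ Icc (-1 : ℝ) 1)
    (hχ₁ : ∀ p : ℕ, χ₁ p = -1 ∨ χ₁ p = 0 ∨ χ₁ p = 1)
    (hχ₂ : ∀ p : ℕ, χ₂ p = -1 ∨ χ₂ p = 0 ∨ χ₂ p = 1)
    (hST : PairSatoTateEquidistributed C D) :
    HasNaturalDensity
      {p | (C p - χ₁ p / (2 * Real.sqrt p)) * (D p - χ₂ p / (2 * Real.sqrt p)) < 0}
      (1 / 2) :=
  density_half_product_neg_general C D χ₁ χ₂ hχ₁ hχ₂ hST
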